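/- Let S^G be a graph pattern in which each variable occurs at most once and in which the constant :λ does not occur. Let t be a triple that is an instantiation of some triple pattern t_S ∈ S^G, and let t′ be a triple that agrees with t on every position where t is not :λ (i.e., for each position i, t′[i] = t[i] or t[i] = :λ). Then t′ is also an instantiation of a triple pattern of S^G (indeed of the same t_S). -/

import Mathlib

namespace Triplestore

/-- RDF constants: URIs, literals, and the special fresh constant `:λ`. -/
inductive Const where
  | uri : String → Const
  | lit : String → Const
  | lambda : Const
deriving DecidableEq

/-- A triple of constants (subject, predicate, object). -/
abbrev Triple := Const × Const × Const

/-- Variables: named variables, plus a supply of fresh variables (indexed by a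
triple and a position) used by the `unpack` operation. -/
inductive Var where
  | name : String → Var
  | fresh : Triple → Fin 3 → Var
deriving DecidableEq

/-- An element of a triple pattern: a constant or a variable. -/
inductive Term where
  | c : Const → Term
  | v : Var → Term
deriving DecidableEq

abbrev TriplePattern := Term × Term × Term
abbrev Pattern := Set TriplePattern
abbrev Graph := Set Triple
abbrev Mapping := Var → Const

def isLit : Const → Prop := fun c => ∃ s, c = Const.lit s
def isUri : Const → Prop := fun c => ∃ s, c = Const.uri s

def Term.isLitTerm : Term → Prop
  | .c k => isLit k
  | .v _ => False

def applyTerm (m : Mapping) : Term → Const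
  | .c k => k
  | .v x => m x

def applyTriple (m : Mapping) (t : TriplePattern) : Triple :=
  (applyTerm m t.1, applyTerm m t.2.1, applyTerm m t.2.2)

def applyPattern (m : Mapping) (A : Pattern) : Graph := applyTriple m '' A

/-- Positional access to the elements of a triple pattern. -/
def tpElem (t : TriplePattern) : Fin 3 → Term := ![t.1, t.2.1, t.2.2]

/-- Positional access to the elements of a triple. -/
def trElem (t : Triple) : Fin 3 → Const := ![t.1, t.2.1, t.2.2]

def termVars : Term → Set Var
  | .c _ => (∅ : Set Var)
  | .v x => {x}

def tripleVars (t : TriplePattern) : Set Var :=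
  termVars t.1 ∪ termVars t.2.1 ∪ termVars t.2.2

def patternVars (A : Pattern) : Set Var := ⋃ t ∈ A, tripleVars t

/-- No literal occurs in the pattern. -/
def literalFree (A : Pattern) : Prop := ∀ t ∈ A, ∀ i : Fin 3, ¬ (tpElem t i).isLitTerm

/-- The special constant `:λ` does not occur in the pattern. -/
def lambdaFree (A : Pattern) : Prop := ∀ t ∈ A, ∀ i : Fin 3, tpElem t i ≠ Term.c Const.lambda

/-- Each variable occurs at most once in the pattern. -/
def varsOnce (A : Pattern) : Prop :=
  ∀ t₁, t₁ ∈ A → ∀ t₂, t₂ ∈ A → ∀ i j : Fin 3, ∀ x : Var,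
    tpElem t₁ i = Term.v x → tpElem t₂ j = Term.v x → t₁ = t₂ ∧ i = j

/-- A triplestore schema `⟨S^G, S^Δ, S^∃⟩`: a graph pattern, a no-literal set of
variables and a set of existential constraints (the latter play no role in the
instance semantics used here). -/
structure Schema where
  graph : Pattern
  noLit : Set Var
  exist : Set (Graph → Prop)

/-- Well-formedness conditions of a triplestore schema: `S^Δ ⊆ vars(S^G)`, each
variable occurs at most once in `S^G`, and the fresh constant `:λ` does not
occur in `S^G`. -/
def Schema.wellFormed (S : Schema) : Prop :=
  S.noLit ⊆ patternVars S.graph ∧ varsOnce S.graph ∧ lambdaFree S.graph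

/-- `t` is obtained from the triple pattern `tp` by substituting its variables
with constants, where variables in the no-literal set `Δ` are substituted only
by non-literals. -/
def tripleInstOf (t : Triple) (tp : TriplePattern) (Δ : Set Var) : Prop :=
  ∃ γ : Mapping, applyTriple γ tp = t ∧ ∀ v ∈ Δ, ¬ isLit (γ v)

/-- `I` is an instance of the schema `S`. -/
def instanceOf (I : Graph) (S : Schema) : Prop :=
  ∀ t ∈ I, ∃ tp ∈ S.graph, tripleInstOf t tp S.noLit

/-- `I(S)`: the set of instances of the schema `S`. -/
def instances (S : Schema) : Set Graph := {I | instanceOf I S}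

/-- An inference rule `r : A → C`. -/
structure Rule where
  ante : Pattern
  cons : Pattern

/-- `⟦A⟧_G`: the set of mappings `m` with `m(A) ⊆ G`. -/
def evals (A : Pattern) (G : Graph) : Set Mapping := {m | applyPattern m A ⊆ G}

def constsOfPattern (A : Pattern) : Set Const :=
  {c | ∃ t ∈ A, ∃ i : Fin 3, tpElem t i = Term.c c}

/-- The URIs occurring in the schema `S` or in the rule `r`. -/
def urisOf (S : Schema) (r : Rule) : Set Const :=
  {c | isUri c ∧
    c ∈ constsOfPattern S.graph ∪ constsOfPattern r.ante ∪ constsOfPattern r.cons}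

/-- The critical instance `C(S,r)`: substitute each variable of `S^G`, in each
position, with every URI occurring in `S` or `r` and with `:λ`. -/
def criticalInstance (S : Schema) (r : Rule) : Graph :=
  {t | ∃ tp ∈ S.graph, ∃ γ : Mapping,
        applyTriple γ tp = t ∧ ∀ v : Var, γ v ∈ urisOf S r ∪ {Const.lambda}}

/-- The mapping sending every variable to `:λ`. -/
def toLambda : Mapping := fun _ => Const.lambda

/-- The sandbox graph `S(S)`: substitute every variable of `S^G` with `:λ`. -/
def sandbox (S : Schema) : Graph := applyPattern toLambda S.graph

def rewriteTerm (a q : Term) : Prop := q = a ∨ q = Term.c Const.lambda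

def rewriteTriple (ta tq : TriplePattern) : Prop :=
  rewriteTerm ta.1 tq.1 ∧ rewriteTerm ta.2.1 tq.2.1 ∧ rewriteTerm ta.2.2 tq.2.2

/-- `q ∈ Q(A)`: `q` is a rewriting of `A`, obtained by replacing any subset of
the elements of `A`'s triple patterns with `:λ`. -/
def isRewriting (A q : Pattern) : Prop :=
  ∃ f : TriplePattern → TriplePattern,
    (∀ t ∈ A, rewriteTriple t (f t)) ∧ q = f '' A

/-- `⟦Q(A)⟧_G = ⋃_{q ∈ Q(A)} ⟦q⟧_G`. -/
def rewritingEvals (A : Pattern) (G : Graph) : Set Mapping :=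
  {m | ∃ q : Pattern, isRewriting A q ∧ m ∈ evals q G}

/-- `unpack` of an element of a triple: replace `:λ` with a fresh variable
(one distinct fresh variable per occurrence). -/
def unpackElem (t : Triple) (i : Fin 3) : Term :=
  if trElem t i = Const.lambda then Term.v (Var.fresh t i) else Term.c (trElem t i)

def unpackTriple (t : Triple) : TriplePattern :=
  (unpackElem t 0, unpackElem t 1, unpackElem t 2)

/-- `unpack`: replace each occurrence of `:λ` in a graph with a fresh variable. -/
def unpack (G : Graph) : Pattern := unpackTriple '' G

/-- The filtering function removes a mapping if a variable mapped to a literal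
occurs in the subject or predicate position of a triple of `A`, or if in some
object position the mapped value is a literal `l` such that no triple pattern
of `S^G` matching the corresponding image triple has `l` or an unconstrained
variable in its object position. -/
def filteredOut (m : Mapping) (A : Pattern) (S : Schema) : Prop :=
  (∃ t ∈ A, ∃ x : Var, (t.1 = Term.v x ∨ t.2.1 = Term.v x) ∧ isLit (m x)) ∨
  (∃ t ∈ A, isLit (applyTerm m t.2.2) ∧
     ¬ ∃ tp ∈ S.graph, (∃ γ : Mapping, applyTriple γ tp = applyTriple m t) ∧
        (tp.2.2 = Term.c (applyTerm m t.2.2) ∨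
         ∃ x : Var, tp.2.2 = Term.v x ∧ x ∉ S.noLit))

/-- `Ω(M, A, S)`: the subset of the mappings of `M` not filtered out. -/
def omegaFilter (M : Set Mapping) (A : Pattern) (S : Schema) : Set Mapping :=
  {m ∈ M | ¬ filteredOut m A S}

/-- Post-processing shared by both approaches: extend the schema with
`unpack(m(C))`, and its (fresh) variables, for every mapping `m ∈ M`. -/
def extendSchema (S : Schema) (M : Set Mapping) (C : Pattern) : Schema :=
  { graph := S.graph ∪ ⋃ m ∈ M, unpack (applyPattern m C)
    noLit := S.noLit ∪ ⋃ m ∈ M, patternVars (unpack (applyPattern m C))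
    exist := S.exist }

/-- The `score` approach: use the mappings of the rewritings of `A` into the
sandbox graph, post-processed by the filtering function `Ω`. -/
def score (S : Schema) (r : Rule) : Schema :=
  extendSchema S (omegaFilter (rewritingEvals r.ante (sandbox S)) r.ante S) r.cons

/-- The critical-instance approach: use the mappings of `A` into the critical
instance, post-processed by the filtering function `Ω`. -/
def critical (S : Schema) (r : Rule) : Schema :=
  extendSchema S (omegaFilter (evals r.ante (criticalInstance S r)) r.ante S) r.cons

/-- The triples derivable by one application of `r` to some instance of `S`. -/
def derivedTriples (S : Schema) (r : Rule) : Set Triple :=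
  {t | ∃ I ∈ instances S, ∃ m : Mapping,
        applyPattern m r.ante ⊆ I ∧ t ∈ applyPattern m r.cons}

/-- `T` is a schema consequence `r(S)`: it extends `S`, the single-triple
instances of `T ∖ S` are exactly the triples derivable by one application of
`r` to an instance of `S`, and the instances of `T` are exactly the graphs
consisting of such derivable triples together with triples allowed by the
original schema. -/
def isSchemaConsequence (S : Schema) (r : Rule) (T : Schema) : Prop :=
  S.graph ⊆ T.graph ∧ S.noLit ⊆ T.noLit ∧ T.exist = S.exist ∧
  (∀ t : Triple, t ∈ derivedTriples S r ↔
      instanceOf {t} ⟨T.graph \ S.graph, T.noLit, T.exist⟩) ∧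
  (∀ I : Graph, instanceOf I T ↔
      ∀ t ∈ I, instanceOf {t} S ∨ t ∈ derivedTriples S r)

/-- `m ≤_λ m*`: the mapping `m*` is more general than `m`. -/
def moreGeneral (m mstar : Mapping) : Prop :=
  ∀ v : Var, mstar v = m v ∨ mstar v = Const.lambda

/-- Instance of a bare graph pattern (no no-literal restrictions). -/
def instOfPattern (I : Graph) (G : Pattern) : Prop :=
  ∀ t ∈ I, ∃ tp ∈ G, ∃ γ : Mapping, applyTriple γ tp = t

/-! Since every variable of `t_S` occurs in a single position, a mapping can be chosen
position by position, so `t_S` matches any triple agreeing with its constants. Those constants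
differ from `:λ`, hence `t'` agrees with `t`, and so with `t_S`, at every constant position. -/

def IsLinear (tp : TriplePattern) : Prop :=
  ∀ i j : Fin 3, ∀ x : Var, tpElem tp i = Term.v x → tpElem tp j = Term.v x → i = j

theorem varsOnce.isLinear {P : Pattern} (hP : varsOnce P) {tp : TriplePattern} (htp : tp ∈ P) :
    IsLinear tp :=
  fun i j x hi hj => (hP tp htp tp htp i j x hi hj).2

theorem trElem_applyTriple (γ : Mapping) (tp : TriplePattern) (i : Fin 3) :
    trElem (applyTriple γ tp) i = applyTerm γ (tpElem tp i) := by
  fin_cases i <;> rfl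

theorem trElem_injective : Function.Injective trElem := by
  rintro ⟨a, b, c⟩ ⟨a', b', c'⟩ h
  simp only [Prod.mk.injEq]
  exact ⟨congrFun h 0, congrFun h 1, congrFun h 2⟩

theorem applyTriple_eq_iff {γ : Mapping} {tp : TriplePattern} {s : Triple} :
    applyTriple γ tp = s ↔ ∀ i, applyTerm γ (tpElem tp i) = trElem s i := by
  simp only [← trElem_applyTriple, ← funext_iff, trElem_injective.eq_iff]

theorem IsLinear.exists_applyTriple_eq {tp : TriplePattern} (hlin : IsLinear tp) (s : Triple)
    (hconst : ∀ i k, tpElem tp i = Term.c k → trElem s i = k) :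
    ∃ γ : Mapping, applyTriple γ tp = s := by
  -- each variable is sent to the entry of `s` at its unique position in `tp`
  refine ⟨fun x => trElem s (Classical.epsilon fun i => tpElem tp i = Term.v x),
    applyTriple_eq_iff.2 fun i => ?_⟩
  cases h : tpElem tp i with
  | c k => exact (hconst i k h).symm
  | v x =>
    have hpos := Classical.epsilon_spec (p := fun j => tpElem tp j = Term.v x) ⟨i, h⟩
    exact congrArg (trElem s) (hlin _ _ x hpos h)

/-- If `t` instantiates `t_S ∈ S^G` (variables occurring at most once, `:λ` not
occurring in `S^G`) and `t'` agrees with `t` on every position where `t` is not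
`:λ`, then `t'` also instantiates the same `t_S`. -/
theorem lambda_positions_arbitrary (P : Pattern) (tS : TriplePattern)
    (t t' : Triple) (g : Mapping)
    (hOnce : varsOnce P) (hlam : lambdaFree P) (htS : tS ∈ P)
    (ht : applyTriple g tS = t)
    (ht' : ∀ i : Fin 3, trElem t' i = trElem t i ∨ trElem t i = Const.lambda) :
    ∃ g' : Mapping, applyTriple g' tS = t' := by
  refine (hOnce.isLinear htS).exists_applyTriple_eq t' fun i k hk => ?_
  have htk : trElem t i = k := by rw [← applyTriple_eq_iff.1 ht i, hk]; rfl
  rcases ht' i with h | h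
  · rw [h, htk]
  · exact absurd (by rw [hk, ← htk, h]) (hlam tS htS i)

end Triplestore
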